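/- Let A be an essential affine hyperplane arrangement in ℝ^n and suppose a polar coordinate system (O; e_1, …, e_n) is generic with respect to A. Then the central arrangement consisting of the directions of the walls of the chamber of A containing O is essential, i.e. the intersection of the directions of these walls is {0}. -/

import Mathlib

open Submodule Set Module
open scoped InnerProductSpace Classical

noncomputable section

abbrev E (n : ℕ) := EuclideanSpace ℝ (Fin n)

/-- An affine hyperplane `{x | ⟪a, x⟫ = c}` with `a ≠ 0`. -/
structure AffHyp (n : ℕ) where
  normal : E n
  const : ℝ
  normal_ne : normal ≠ 0

/-- The affine hyperplane as a set. -/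
def AffHyp.carrier {n : ℕ} (H : AffHyp n) : Set (E n) :=
  {x | ⟪H.normal, x⟫_ℝ = H.const}

/-- The facet of the arrangement `A` containing `x`: the set of points whose sign
vector with respect to all hyperplanes of `A` agrees with that of `x`. -/
def facet {n : ℕ} (A : Finset (AffHyp n)) (x : E n) : Set (E n) :=
  {y | ∀ H ∈ A,
    Real.sign (⟪H.normal, y⟫_ℝ - H.const) = Real.sign (⟪H.normal, x⟫_ℝ - H.const)}

/-- Dimension of a subset of `ℝⁿ`: the dimension of its affine span. -/
def sdim {n : ℕ} (s : Set (E n)) : ℕ :=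
  finrank ℝ (affineSpan ℝ s).direction

/-- The intersection of a subfamily of hyperplanes. -/
def interFam {n : ℕ} (S : Finset (AffHyp n)) : Set (E n) :=
  {x | ∀ H ∈ S, x ∈ H.carrier}

/-- The affine arrangement `A` is essential: the minimal nonempty intersections of
subfamilies are points, i.e. some subfamily has a nonempty zero-dimensional
intersection. -/
def EssentialAffine {n : ℕ} (A : Finset (AffHyp n)) : Prop :=
  ∃ S : Finset (AffHyp n), S ⊆ A ∧ (interFam S).Nonempty ∧ sdim (interFam S) = 0

/-- `B(S)`: the union of the bounded facets of the arrangement. -/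
def boundedFacets {n : ℕ} (A : Finset (AffHyp n)) : Set (E n) :=
  {x | Bornology.IsBounded (facet A x)}

/-- `W_i = span(e_i, …, e_n)` (1-based; `e_j = b (j - 1)`). -/
def Wsub {n : ℕ} (b : OrthonormalBasis (Fin n) ℝ (E n)) (i : ℕ) :
    Submodule ℝ (E n) :=
  Submodule.span ℝ (⇑b '' {j : Fin n | i ≤ (j : ℕ) + 1})

/-- `P_i`: the orthogonal projection of `P - O` onto `W_i`. -/
def projW {n : ℕ} (O : E n) (b : OrthonormalBasis (Fin n) ℝ (E n)) (i : ℕ)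
    (P : E n) : E n :=
  (orthogonalProjection (Wsub b i) (P - O) : E n)

/-- The polar coordinates of `P` for the polar system `(O; b)`:
`theta O b 0 P = ρ(P) = ‖P - O‖`; for `1 ≤ i ≤ n - 2`, `theta O b i P ∈ [0, π]`
is the angle between `P_i` and `e_i` (equal to `0` when `P_i = 0`); and
`theta O b (n-1) P ∈ (-π, π]` is the signed angle from `e_{n-1}` to `P_{n-1}`
in the plane `W_{n-1}` oriented by `(e_{n-1}, e_n)`. -/
def theta {n : ℕ} (O : E n) (b : OrthonormalBasis (Fin n) ℝ (E n)) (i : ℕ)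
    (P : E n) : ℝ :=
  if h0 : i = 0 then ‖P - O‖
  else if h1 : i + 1 < n then
    (if projW O b i P = 0 then 0
     else InnerProductGeometry.angle (projW O b i P) (b ⟨i - 1, by omega⟩))
  else if h2 : i < n then
    Complex.arg ((⟪P - O, b ⟨i - 1, by omega⟩⟫_ℝ : ℂ)
      + (⟪P - O, b ⟨i, h2⟩⟫_ℝ : ℂ) * Complex.I)
  else 0

/-- The open cone `B̃(δ) = {P : ρ(P) > 0, θ_i(P) ∈ (0, δ) for i = 1, …, n-1}`. -/
def Btilde {n : ℕ} (O : E n) (b : OrthonormalBasis (Fin n) ℝ (E n)) (δ : ℝ) :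
    Set (E n) :=
  {P | 0 < ‖P - O‖ ∧ ∀ i : ℕ, 1 ≤ i → i ≤ n - 1 → theta O b i P ∈ Set.Ioo 0 δ}

/-- `V_i(θ̄) = {P : θ_j(P) = θ̄_j for j = i, …, n-1}` (with `θ_0 = ρ`). -/
def Vθ {n : ℕ} (O : E n) (b : OrthonormalBasis (Fin n) ℝ (E n)) (i : ℕ)
    (θbar : ℕ → ℝ) : Set (E n) :=
  {P | ∀ j : ℕ, i ≤ j → j ≤ n - 1 → theta O b j P = θbar j}

/-- The polar system `(O; b)` is generic with respect to `A`:
(i) `O` lies in a chamber of `A`;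
(ii) there is `δ ∈ (0, π/2)` with `B(S) ⊆ B̃(δ)`;
(iii) every `V_i(θ̄)` (all `θ̄_j ∈ [0, δ]`) meeting `clos B̃(δ)` is generic with
respect to every nonempty intersection `L` of a subfamily of `A` of codimension
`k ≤ i`: it meets `L ∩ clos B̃(δ)` and `dim (|V_i(θ̄)| ∩ L) = i - k`. -/
def IsGenericPolar {n : ℕ} (A : Finset (AffHyp n)) (O : E n)
    (b : OrthonormalBasis (Fin n) ℝ (E n)) : Prop :=
  (∀ H ∈ A, ⟪H.normal, O⟫_ℝ ≠ H.const) ∧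
  ∃ δ : ℝ, 0 < δ ∧ δ < Real.pi / 2 ∧
    boundedFacets A ⊆ Btilde O b δ ∧
    ∀ i : ℕ, i ≤ n → ∀ θbar : ℕ → ℝ,
      (∀ j, i ≤ j → j ≤ n - 1 → θbar j ∈ Set.Icc 0 δ) →
      (Vθ O b i θbar ∩ closure (Btilde O b δ)).Nonempty →
      ∀ S : Finset (AffHyp n), S ⊆ A → (interFam S).Nonempty →
        n - sdim (interFam S) ≤ i →
        (Vθ O b i θbar ∩ interFam S ∩ closure (Btilde O b δ)).Nonempty ∧
        sdim ((affineSpan ℝ (Vθ O b i θbar) : Set (E n)) ∩ interFam S)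
          = i - (n - sdim (interFam S))

/-- `H` is a wall of the chamber `C`: `H ∈ A` and `clos C ∩ H` has dimension
`n - 1`. -/
def IsWall {n : ℕ} (A : Finset (AffHyp n)) (C : Set (E n)) (H : AffHyp n) :
    Prop :=
  H ∈ A ∧ sdim (closure C ∩ H.carrier) = n - 1

/-!
If a nonzero `v` were orthogonal to the normals of all walls of the chamber `C ∋ O`, essentiality
gives a hyperplane `H₀ ∈ A` not parallel to `v`. Walk from a generic point `Q ∈ C` along the line
`Q + ℝ v`, in the direction in which it meets `H₀`, up to the first point `P` where it meets a
hyperplane `H₁` of `A`. Genericity of `Q` makes `H₁` the only hyperplane of `A` through `P`, so near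
`P` the hyperplane `H₁` bounds `C`: it is a wall, and it is not parallel to `v`.
-/

open Filter Topology

lemma Real.sign_eq_sign_iff_mul_pos {x y : ℝ} (hy : y ≠ 0) :
    Real.sign x = Real.sign y ↔ 0 < x * y := by
  rcases hy.lt_or_gt with hy | hy <;> rcases lt_trichotomy x 0 with hx | rfl | hx <;>
    simp [Real.sign_of_neg, Real.sign_of_pos, mul_pos_iff, *] <;> norm_num <;> linarith

theorem Real.sign_eq_of_forall_ne_zero {f : ℝ → ℝ} {a b : ℝ} (hab : a ≤ b)
    (hf : ContinuousOn f (Set.Icc a b)) (hne : ∀ t ∈ Set.Icc a b, f t ≠ 0) :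
    Real.sign (f b) = Real.sign (f a) := by
  rw [Real.sign_eq_sign_iff_mul_pos (hne a ⟨le_rfl, hab⟩)]
  by_contra! hnonpos
  have hzero : (0 : ℝ) ∈ Set.uIcc (f a) (f b) := by
    rw [Set.mem_uIcc]
    rcases mul_nonpos_iff.mp hnonpos with h | h
    · exact Or.inl ⟨h.2, h.1⟩
    · exact Or.inr ⟨h.1, h.2⟩
  obtain ⟨t, ht, hft⟩ := intermediate_value_uIcc (by rwa [Set.uIcc_of_le hab]) hzero
  exact hne t (by rwa [Set.uIcc_of_le hab] at ht) hft

theorem exists_mem_forall_inner_ne {V ι : Type*} [NormedAddCommGroup V] [InnerProductSpace ℝ V]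
    [FiniteDimensional ℝ V] {U : Set V} (hU : IsOpen U) (hne : U.Nonempty) (s : Finset ι)
    (a : ι → V) (c : ι → ℝ) (ha : ∀ i ∈ s, a i ≠ 0) :
    ∃ x ∈ U, ∀ i ∈ s, ⟪a i, x⟫_ℝ ≠ c i := by
  have hsurj : ∀ i ∈ s, Function.Surjective (innerₛₗ ℝ (a i)) := fun i hi r =>
    ⟨(r / ‖a i‖ ^ 2) • a i, by simp [ha i hi]⟩
  have hdense : Dense (⋂ i ∈ s, {x : V | ⟪a i, x⟫_ℝ ≠ c i}) :=
    dense_biInter_of_isOpen (fun i _ => isOpen_ne_fun (by fun_prop) continuous_const)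
      s.countable_toSet fun i hi =>
        (dense_compl_singleton (c i)).preimage
          ((innerₛₗ ℝ (a i)).isOpenMap_of_finiteDimensional (hsurj i hi))
  obtain ⟨x, hxU, hx⟩ := hdense.inter_open_nonempty U hU hne
  exact ⟨x, hxU, Set.mem_iInter₂.mp hx⟩

namespace AffHyp

variable {n : ℕ}

def eval (H : AffHyp n) (x : E n) : ℝ := ⟪H.normal, x⟫_ℝ - H.const

@[fun_prop]
theorem continuous_eval (H : AffHyp n) : Continuous H.eval := by
  unfold eval; fun_prop

theorem eval_add_smul (H : AffHyp n) (x v : E n) (t : ℝ) :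
    H.eval (x + t • v) = H.eval x + t * ⟪H.normal, v⟫_ℝ := by
  simp only [eval, inner_add_right, real_inner_smul_right]
  ring

theorem eval_eq_zero_iff {H : AffHyp n} {x : E n} : H.eval x = 0 ↔ x ∈ H.carrier :=
  sub_eq_zero

theorem eval_eq_mul_of_normal_eq_smul {H H' : AffHyp n} {P : E n} {μ : ℝ}
    (hμ : H.normal = μ • H'.normal) (hP : H.eval P = 0) (hP' : H'.eval P = 0) (x : E n) :
    H.eval x = μ * H'.eval x := by
  have heval : ∀ G : AffHyp n, G.eval P = 0 → G.eval x = ⟪G.normal, x - P⟫_ℝ := fun G hG => by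
    rw [inner_sub_right, ← sub_zero (G.eval x), ← hG]; simp only [eval]; ring
  rw [heval H hP, heval H' hP', hμ, real_inner_smul_left]

end AffHyp

open AffHyp

section Chamber

variable {n : ℕ} {A : Finset (AffHyp n)} {O : E n}

theorem mem_facet_iff_mul_pos (hO : ∀ H ∈ A, ⟪H.normal, O⟫_ℝ ≠ H.const) {y : E n} :
    y ∈ facet A O ↔ ∀ H ∈ A, 0 < H.eval y * H.eval O :=
  forall₂_congr fun H hH => Real.sign_eq_sign_iff_mul_pos (sub_ne_zero.mpr (hO H hH))

theorem isOpen_facet (hO : ∀ H ∈ A, ⟪H.normal, O⟫_ℝ ≠ H.const) : IsOpen (facet A O) := by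
  have : facet A O = ⋂ H ∈ A, {y | 0 < H.eval y * H.eval O} := by
    ext y; simp [mem_facet_iff_mul_pos hO]
  rw [this]
  exact isOpen_biInter_finset fun H _ => isOpen_lt continuous_const (by fun_prop)

theorem self_mem_facet (A : Finset (AffHyp n)) (O : E n) : O ∈ facet A O := fun _ _ => rfl

theorem eval_ne_zero_of_mem_facet (hO : ∀ H ∈ A, ⟪H.normal, O⟫_ℝ ≠ H.const) {Q : E n}
    (hQ : Q ∈ facet A O) {H : AffHyp n} (hH : H ∈ A) : H.eval Q ≠ 0 :=
  left_ne_zero_of_mul ((mem_facet_iff_mul_pos hO).mp hQ H hH).ne'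

end Chamber

theorem eq_zero_of_forall_inner_normal_eq_zero {n : ℕ} {A : Finset (AffHyp n)}
    (hA : EssentialAffine A) {v : E n} (hv : ∀ H ∈ A, ⟪H.normal, v⟫_ℝ = 0) : v = 0 := by
  obtain ⟨S, hSA, ⟨p, hp⟩, hdim⟩ := hA
  have hpv : p + v ∈ interFam S := fun H hH => by
    show ⟪H.normal, p + v⟫_ℝ = H.const
    rw [inner_add_right, hv H (hSA hH), add_zero]
    exact hp H hH
  have hvS : v ∈ vectorSpan ℝ (interFam S) := by
    simpa using vsub_mem_vectorSpan ℝ hpv hp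
  rw [sdim, direction_affineSpan, Submodule.finrank_eq_zero] at hdim
  rwa [hdim, Submodule.mem_bot] at hvS

theorem sdim_eq_sub_one_of_eventually_mem {n : ℕ} {H : AffHyp n} {s : Set (E n)} {P : E n}
    (hP : P ∈ H.carrier) (hs : s ⊆ H.carrier) (hloc : ∀ᶠ y in 𝓝 P, y ∈ H.carrier → y ∈ s) :
    sdim s = n - 1 := by
  have hPs : P ∈ s := hloc.self_of_nhds hP
  have hdir : vectorSpan ℝ s = (ℝ ∙ H.normal)ᗮ := by
    apply le_antisymm
    · rw [vectorSpan_def, Submodule.span_le]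
      rintro _ ⟨y, hy, x, hx, rfl⟩
      rw [SetLike.mem_coe, Submodule.mem_orthogonal_singleton_iff_inner_right]
      simp only [vsub_eq_sub, inner_sub_right]
      exact sub_eq_zero.mpr ((hs hy).trans (hs hx).symm)
    · intro w hw
      rw [Submodule.mem_orthogonal_singleton_iff_inner_right] at hw
      have hline : ∀ᶠ t in 𝓝[>] (0 : ℝ), P + t • w ∈ s := by
        have hlim : Tendsto (fun t : ℝ => P + t • w) (𝓝[>] 0) (𝓝 P) := by
          have hcont : Continuous fun t : ℝ => P + t • w := by fun_prop
          simpa using (hcont.tendsto 0).mono_left nhdsWithin_le_nhds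
        refine (hlim.eventually hloc).mono fun t ht => ht ?_
        show ⟪H.normal, P + t • w⟫_ℝ = H.const
        rw [inner_add_right, real_inner_smul_right, hw, mul_zero, add_zero]
        exact hP
      obtain ⟨t, hts, ht⟩ := (hline.and self_mem_nhdsWithin).exists
      have htw : t • w ∈ vectorSpan ℝ s := by simpa using vsub_mem_vectorSpan ℝ hts hPs
      simpa [smul_smul, ht.ne'] using Submodule.smul_mem _ t⁻¹ htw
  have hsum := (ℝ ∙ H.normal).finrank_add_finrank_orthogonal
  rw [finrank_span_singleton H.normal_ne, finrank_euclideanSpace_fin] at hsum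
  rw [sdim, direction_affineSpan, hdir]
  omega

section Walls

variable {n : ℕ} {A : Finset (AffHyp n)} {O : E n}

theorem eventually_mem_closure_facet (hO : ∀ H ∈ A, ⟪H.normal, O⟫_ℝ ≠ H.const)
    {H₁ : AffHyp n} {P : E n}
    (hside : ∀ H ∈ A, H.eval P ≠ 0 → Real.sign (H.eval P) = Real.sign (H.eval O))
    (hprop : ∀ H ∈ A, H.eval P = 0 → ∃ μ : ℝ, ∀ x, H.eval x = μ * H₁.eval x) :
    ∀ᶠ y in 𝓝 P, y ∈ H₁.carrier → y ∈ closure (facet A O) := by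
  have hnear : ∀ᶠ z in 𝓝 P, ∀ H ∈ A, H.eval P ≠ 0 → 0 < H.eval z * H.eval O := by
    refine (eventually_all_finset A).mpr fun H hH => ?_
    by_cases hP : H.eval P = 0
    · exact .of_forall fun _ h => absurd hP h
    · have hpos : 0 < H.eval P * H.eval O :=
        (Real.sign_eq_sign_iff_mul_pos (sub_ne_zero.mpr (hO H hH))).mp (hside H hH hP)
      have hcont : ContinuousAt (fun z => H.eval z * H.eval O) P := by fun_prop
      exact (continuousAt_const.eventually_lt hcont hpos).mono fun z hz _ => hz
  filter_upwards [hnear.eventually_nhds] with y hy hy₁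
  -- `w` points from `H₁` into the side of `O`.
  set w : E n := H₁.eval O • H₁.normal
  have hlim : Tendsto (fun t : ℝ => y + t • w) (𝓝[>] 0) (𝓝 y) := by
    have hcont : Continuous fun t : ℝ => y + t • w := by fun_prop
    simpa using (hcont.tendsto 0).mono_left nhdsWithin_le_nhds
  refine mem_closure_of_tendsto hlim ?_
  filter_upwards [hlim.eventually hy, self_mem_nhdsWithin] with t ht htpos
  rw [mem_facet_iff_mul_pos hO]
  intro H hH
  by_cases hP : H.eval P = 0
  · obtain ⟨μ, hμ⟩ := hprop H hH hP
    have hμO : μ * H₁.eval O ≠ 0 := hμ O ▸ sub_ne_zero.mpr (hO H hH)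
    have hy₁' : H₁.eval y = 0 := eval_eq_zero_iff.mpr hy₁
    calc 0 < (μ * H₁.eval O) ^ 2 * (t * ‖H₁.normal‖ ^ 2) :=
          mul_pos (pow_two_pos_of_ne_zero hμO)
            (mul_pos htpos (pow_pos (norm_pos_iff.mpr H₁.normal_ne) 2))
      _ = H.eval (y + t • w) * H.eval O := by
          rw [hμ, hμ O, eval_add_smul, hy₁', real_inner_smul_right, real_inner_self_eq_norm_sq]
          ring
  · exact ht H hH hP

theorem isWall_of_only_hyperplane_through (hO : ∀ H ∈ A, ⟪H.normal, O⟫_ℝ ≠ H.const)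
    {H₁ : AffHyp n} (hH₁ : H₁ ∈ A) {P : E n} (hP₁ : H₁.eval P = 0)
    (hside : ∀ H ∈ A, H.eval P ≠ 0 → Real.sign (H.eval P) = Real.sign (H.eval O))
    (hprop : ∀ H ∈ A, H.eval P = 0 → ∃ μ : ℝ, ∀ x, H.eval x = μ * H₁.eval x) :
    IsWall A (facet A O) H₁ :=
  ⟨hH₁, sdim_eq_sub_one_of_eventually_mem (eval_eq_zero_iff.mp hP₁) Set.inter_subset_right
    ((eventually_mem_closure_facet hO hside hprop).mono fun _ hy hy₁ => ⟨hy hy₁, hy₁⟩)⟩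

end Walls

section Crossing

variable {n : ℕ} {A : Finset (AffHyp n)}

def IsGenericLine (A : Finset (AffHyp n)) (Q v : E n) : Prop :=
  ∀ H ∈ A, ∀ H' ∈ A, ⟪H.normal, v⟫_ℝ ≠ 0 → ⟪H'.normal, v⟫_ℝ ≠ 0 → ∀ t : ℝ,
    H.eval (Q + t • v) = 0 → H'.eval (Q + t • v) = 0 → ∃ μ : ℝ, ∀ x, H.eval x = μ * H'.eval x

theorem IsGenericLine.neg {Q v : E n} (h : IsGenericLine A Q v) : IsGenericLine A Q (-v) := by
  intro H hH H' hH' ha ha' t ht ht'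
  rw [inner_neg_right, neg_ne_zero] at ha ha'
  rw [smul_neg, ← neg_smul] at ht ht'
  exact h H hH H' hH' ha ha' (-t) ht ht'

theorem exists_isGenericLine {U : Set (E n)} (hU : IsOpen U) (hne : U.Nonempty)
    (A : Finset (AffHyp n)) (v : E n) : ∃ Q ∈ U, IsGenericLine A Q v := by
  -- Rescaled by `⟪H.normal, v⟫`, the line meets `H` at time `d H - ⟪m H, Q⟫`.
  let m : AffHyp n → E n := fun H => (⟪H.normal, v⟫_ℝ)⁻¹ • H.normal
  let d : AffHyp n → ℝ := fun H => H.const / ⟪H.normal, v⟫_ℝ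
  obtain ⟨Q, hQU, hQ⟩ := exists_mem_forall_inner_ne hU hne
    ((A ×ˢ A).filter fun p => m p.1 ≠ m p.2) (fun p => m p.1 - m p.2) (fun p => d p.1 - d p.2)
    (fun p hp => sub_ne_zero.mpr (Finset.mem_filter.mp hp).2)
  refine ⟨Q, hQU, fun H hH H' hH' ha ha' t ht ht' => ?_⟩
  have hscaled : ∀ G : AffHyp n, ⟪G.normal, v⟫_ℝ ≠ 0 → G.eval (Q + t • v) = 0 →
      ⟪m G, Q⟫_ℝ = d G - t := by
    intro G hG h
    rw [eval_add_smul] at h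
    simp only [m, d, real_inner_smul_left, eval] at h ⊢
    field_simp
    linarith
  have hm : m H = m H' := by
    by_contra hne
    refine hQ (H, H') (Finset.mem_filter.mpr ⟨Finset.mem_product.mpr ⟨hH, hH'⟩, hne⟩) ?_
    rw [inner_sub_left, hscaled H ha ht, hscaled H' ha' ht']
    ring
  refine ⟨⟪H.normal, v⟫_ℝ / ⟪H'.normal, v⟫_ℝ, eval_eq_mul_of_normal_eq_smul ?_ ht ht'⟩
  calc H.normal = ⟪H.normal, v⟫_ℝ • m H := by simp [m, smul_smul, ha]
    _ = _ := by rw [hm]; simp [m, smul_smul, div_eq_mul_inv]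

theorem exists_first_crossing {Q v : E n} (hQ : ∀ H ∈ A, H.eval Q ≠ 0) {H₀ : AffHyp n}
    (hH₀ : H₀ ∈ A) {t₀ : ℝ} (ht₀ : 0 < t₀) (h₀ : H₀.eval (Q + t₀ • v) = 0) :
    ∃ T : ℝ, 0 < T ∧ ∃ H₁ ∈ A, H₁.eval (Q + T • v) = 0 ∧
      ∀ H ∈ A, ∀ t ∈ Set.Ico 0 T, H.eval (Q + t • v) ≠ 0 := by
  set Z : Set ℝ := {t | 0 < t ∧ ∃ H ∈ A, H.eval (Q + t • v) = 0}
  have hZ : Z.Finite := by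
    refine (A.image fun H => -H.eval Q / ⟪H.normal, v⟫_ℝ).finite_toSet.subset ?_
    rintro t ⟨-, H, hH, ht⟩
    rw [eval_add_smul] at ht
    have ha : ⟪H.normal, v⟫_ℝ ≠ 0 := fun ha => hQ H hH (by simpa [ha] using ht)
    exact Finset.mem_image.mpr ⟨H, hH, by field_simp; linarith⟩
  obtain ⟨T, ⟨hT, H₁, hH₁, hT₁⟩, hmin⟩ := Set.exists_min_image Z id hZ ⟨t₀, ht₀, H₀, hH₀, h₀⟩
  refine ⟨T, hT, H₁, hH₁, hT₁, fun H hH t ht h => ?_⟩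
  rcases ht.1.eq_or_lt with rfl | htpos
  · exact hQ H hH (by simpa using h)
  · exact ht.2.not_ge (hmin t ⟨htpos, H, hH, h⟩)

variable {O : E n}

theorem exists_wall_of_crossing (hO : ∀ H ∈ A, ⟪H.normal, O⟫_ℝ ≠ H.const) {Q v : E n}
    (hQ : Q ∈ facet A O) (hline : IsGenericLine A Q v) {H₀ : AffHyp n} (hH₀ : H₀ ∈ A) {t₀ : ℝ}
    (ht₀ : 0 < t₀) (h₀ : H₀.eval (Q + t₀ • v) = 0) :
    ∃ H ∈ A, ⟪H.normal, v⟫_ℝ ≠ 0 ∧ IsWall A (facet A O) H := by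
  have hQ' : ∀ H ∈ A, H.eval Q ≠ 0 := fun H hH => eval_ne_zero_of_mem_facet hO hQ hH
  obtain ⟨T, hT, H₁, hH₁, hT₁, hfirst⟩ := exists_first_crossing hQ' hH₀ ht₀ h₀
  have htransversal : ∀ H ∈ A, H.eval (Q + T • v) = 0 → ⟪H.normal, v⟫_ℝ ≠ 0 :=
    fun H hH h ha => hQ' H hH (by simpa [eval_add_smul, ha] using h)
  refine ⟨H₁, hH₁, htransversal H₁ hH₁ hT₁,
    isWall_of_only_hyperplane_through hO hH₁ hT₁ (fun H hH hP => ?_) fun H hH hP =>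
      hline H hH H₁ hH₁ (htransversal H hH hP) (htransversal H₁ hH₁ hT₁) T hP hT₁⟩
  have hsign := Real.sign_eq_of_forall_ne_zero (f := fun t => H.eval (Q + t • v)) hT.le
    (by fun_prop) fun t ht => (ht.2.lt_or_eq).elim (fun htT => hfirst H hH t ⟨ht.1, htT⟩)
      fun htT => htT ▸ hP
  simp only [zero_smul, add_zero] at hsign
  exact hsign.trans (hQ H hH)

theorem exists_wall_inner_ne_zero (hO : ∀ H ∈ A, ⟪H.normal, O⟫_ℝ ≠ H.const) {v : E n}
    {H₀ : AffHyp n} (hH₀ : H₀ ∈ A) (hv : ⟪H₀.normal, v⟫_ℝ ≠ 0) :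
    ∃ H ∈ A, ⟪H.normal, v⟫_ℝ ≠ 0 ∧ IsWall A (facet A O) H := by
  obtain ⟨Q, hQ, hline⟩ := exists_isGenericLine (isOpen_facet hO) ⟨O, self_mem_facet A O⟩ A v
  set t₀ := -H₀.eval Q / ⟪H₀.normal, v⟫_ℝ
  have h₀ : H₀.eval (Q + t₀ • v) = 0 := by
    rw [eval_add_smul, div_mul_cancel₀ _ hv, add_neg_cancel]
  have ht₀ : t₀ ≠ 0 := div_ne_zero (neg_ne_zero.mpr (eval_ne_zero_of_mem_facet hO hQ hH₀)) hv
  rcases ht₀.lt_or_gt with hneg | hpos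
  · obtain ⟨H, hH, hHv, hwall⟩ := exists_wall_of_crossing hO hQ hline.neg hH₀ (neg_pos.mpr hneg)
      (by rwa [neg_smul_neg])
    exact ⟨H, hH, by rwa [inner_neg_right, neg_ne_zero] at hHv, hwall⟩
  · exact exists_wall_of_crossing hO hQ hline hH₀ hpos h₀

end Crossing

/-- If a polar coordinate system `(O; b)` is generic with respect to an essential
affine arrangement `A`, then the central arrangement of the directions of the
walls of the chamber of `A` containing `O` is essential: the intersection of those
directions is `{0}`. -/
theorem walls_of_generic_chamber_essential (n : ℕ) (A : Finset (AffHyp n))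
    (hA : EssentialAffine A) (O : E n) (b : OrthonormalBasis (Fin n) ℝ (E n))
    (hgen : IsGenericPolar A O b) :
    {v : E n | ∀ H : AffHyp n, IsWall A (facet A O) H → ⟪H.normal, v⟫_ℝ = 0}
      = {0} := by
  refine Set.eq_singleton_iff_unique_mem.mpr ⟨fun H _ => inner_zero_right _, fun v hv => ?_⟩
  refine eq_zero_of_forall_inner_normal_eq_zero hA fun H₀ hH₀ => ?_
  by_contra hH₀v
  obtain ⟨H, -, hHv, hwall⟩ := exists_wall_inner_ne_zero hgen.1 hH₀ hH₀v
  exact hHv (hv H hwall)
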